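/- For n ≥ 2, let ℓ_1 be the concatenation of all binary Lyndon words of length d dividing n, d ≥ 2, which contain 0 but not 00. Then the number of 1's in ℓ_1 is F_{n+1} - 1. -/

import Mathlib

/-- A binary word (over `Bool`, `false` = 0, `true` = 1) is a Lyndon word if
it is strictly lexicographically smaller than each of its proper rotations. -/
def IsLyndon (w : List Bool) : Prop :=
  ∀ i, 0 < i → i < w.length → w < w.rotate i

open List

def CycFF (u : List Bool) : Prop :=
  ∃ a, u[a]? = some false ∧ u[(a+1) % u.length]? = some false

def pw (v : List Bool) (k : ℕ) : List Bool := (List.replicate k v).flatten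

lemma pw_zero (v : List Bool) : pw v 0 = [] := rfl

lemma pw_succ (v : List Bool) (k : ℕ) : pw v (k+1) = v ++ pw v k := by
  simp [pw, replicate_succ]

lemma length_pw (v : List Bool) (k : ℕ) : (pw v k).length = k * v.length := by
  induction k with
  | zero => simp [pw_zero]
  | succ k ih => rw [pw_succ, length_append, ih]; ring

lemma pw_succ' (v : List Bool) (k : ℕ) : pw v (k+1) = pw v k ++ v := by
  induction k with
  | zero => simp [pw_succ, pw_zero]
  | succ k ih => rw [pw_succ, ih, ← append_assoc, ← pw_succ, ih]

lemma getElem?_pw {v : List Bool} {k j : ℕ} (hj : j < k * v.length) :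
    (pw v k)[j]? = v[j % v.length]? := by
  induction k generalizing j with
  | zero => omega
  | succ k ih =>
    rw [pw_succ]
    rcases lt_or_ge j v.length with h | h
    · rw [getElem?_append_left h, Nat.mod_eq_of_lt h]
    · have hk : (k+1) * v.length = k * v.length + v.length := by ring
      rw [getElem?_append_right h, ih (by omega)]
      congr 1
      conv_rhs => rw [Nat.mod_eq_sub_mod h]

lemma pair_infix_iff {x y : Bool} {u : List Bool} :
    [x, y] <:+: u ↔ ∃ j, u[j]? = some x ∧ u[j+1]? = some y := by
  constructor
  · rintro ⟨s, t, rfl⟩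
    rw [append_assoc]
    refine ⟨s.length, ?_, ?_⟩
    · rw [getElem?_append_right le_rfl]
      simp
    · rw [getElem?_append_right (by omega)]
      have : s.length + 1 - s.length = 1 := by omega
      rw [this]
      simp
  · rintro ⟨j, hx, hy⟩
    have hj : j < u.length := by
      by_contra h
      rw [getElem?_eq_none (by omega)] at hx; simp at hx
    have hj1 : j + 1 < u.length := by
      by_contra h
      rw [getElem?_eq_none (by omega)] at hy; simp at hy
    have hx' : u[j]'hj = x := by
      rw [getElem?_eq_getElem hj] at hx; exact Option.some_injective _ hx
    have hy' : u[j+1]'hj1 = y := by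
      rw [getElem?_eq_getElem hj1] at hy; exact Option.some_injective _ hy
    refine ⟨u.take j, u.drop (j+2), ?_⟩
    conv_rhs => rw [← take_append_drop j u]
    rw [drop_eq_getElem_cons hj, drop_eq_getElem_cons hj1, hx', hy']
    simp

lemma getElem?_rotate' {l : List Bool} {n m : ℕ} (hml : m < l.length) :
    (l.rotate n)[m]? = l[(m + n) % l.length]? := List.getElem?_rotate hml

lemma rotate_pw_comm (v : List Bool) (k c : ℕ) :
    (pw v k).rotate c = pw (v.rotate c) k := by
  rcases Nat.eq_zero_or_pos v.length with hd | hd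
  · have hv : v = [] := eq_nil_of_length_eq_zero hd
    subst hv
    have hp : pw ([] : List Bool) k = [] := by
      induction k with
      | zero => rfl
      | succ k ih => rw [pw_succ]; simpa
    simp [hp]
  apply List.ext_getElem?
  intro j
  rcases lt_or_ge j (k * v.length) with hj | hj
  · have hkd : 0 < k * v.length := by omega
    rw [getElem?_rotate' (by rw [length_pw]; exact hj), length_pw,
      getElem?_pw (Nat.mod_lt _ hkd),
      getElem?_pw (by rw [length_rotate]; exact hj), length_rotate,
      getElem?_rotate' (Nat.mod_lt _ hd)]
    congr 1
    rw [Nat.mod_mod_of_dvd _ ⟨k, by ring⟩, Nat.mod_add_mod]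
  · rw [getElem?_eq_none, getElem?_eq_none] <;> simp [length_rotate, length_pw] <;> omega

lemma rotate_pw_self {v : List Bool} {k : ℕ} (hk : 0 < k) :
    (pw v k).rotate v.length = pw v k := by
  rw [rotate_pw_comm, rotate_length]

lemma rot_mul {u : List Bool} {b : ℕ} (h : u.rotate b = u) (q : ℕ) : u.rotate (b * q) = u := by
  induction q with
  | zero => simp
  | succ q ih =>
    have : b * (q + 1) = b * q + b := by ring
    rw [this, ← rotate_rotate, ih, h]

lemma rot_gcd (u : List Bool) : ∀ a b, u.rotate a = u → u.rotate b = u →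
    u.rotate (Nat.gcd a b) = u := by
  intro a
  induction a using Nat.strong_induction_on with
  | _ a ih =>
    intro b ha hb
    rcases Nat.eq_zero_or_pos a with rfl | hpos
    · simpa using hb
    rw [Nat.gcd_rec]
    refine ih (b % a) (Nat.mod_lt _ hpos) a ?_ ha
    have : b = a * (b / a) + b % a := (Nat.div_add_mod b a).symm
    calc u.rotate (b % a) = (u.rotate (a * (b / a))).rotate (b % a) := by rw [rot_mul ha]
    _ = u.rotate (a * (b / a) + b % a) := rotate_rotate _ _ _
    _ = u := by rw [← this, hb]

lemma per_of_rotate {u : List Bool} {g : ℕ} (hg : 0 < g) (hr : u.rotate g = u) :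
    ∀ j, j < u.length → u[j]? = u[j % g]? := by
  intro j
  induction j using Nat.strong_induction_on with
  | _ j ih =>
    intro hj
    rcases lt_or_ge j g with h | h
    · rw [Nat.mod_eq_of_lt h]
    · have h1 : j - g < u.length := by omega
      have : (u.rotate g)[j - g]? = u[(j - g + g) % u.length]? := getElem?_rotate' h1
      rw [hr, Nat.sub_add_cancel h, Nat.mod_eq_of_lt hj] at this
      rw [← this, ih (j - g) (by omega) h1, Nat.mod_eq_sub_mod h]

lemma eq_pw_of_rotate {u : List Bool} {g : ℕ} (hg : 0 < g) (hdvd : g ∣ u.length)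
    (hr : u.rotate g = u) : u = pw (u.take g) (u.length / g) := by
  have hgle : g ≤ u.length ∨ u.length = 0 := by
    rcases hdvd with ⟨c, hc⟩; rcases Nat.eq_zero_or_pos c with rfl | hcpos
    · right; simpa using hc
    · left; rw [hc]; exact Nat.le_mul_of_pos_right _ hcpos
  rcases hgle with hgle | h0
  · have htl : (u.take g).length = g := by rw [length_take]; omega
    apply List.ext_getElem?
    intro j
    rcases lt_or_ge j u.length with hj | hj
    · rw [getElem?_pw (by rw [htl, Nat.div_mul_cancel hdvd]; exact hj), htl,
        getElem?_take, if_pos (Nat.mod_lt _ hg), per_of_rotate hg hr j hj]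
    · rw [getElem?_eq_none hj, getElem?_eq_none]
      rw [length_pw, htl, Nat.div_mul_cancel hdvd]; exact hj
  · rw [eq_nil_of_length_eq_zero h0]; simp [h0, pw]

lemma lt_len_of_some {u : List Bool} {j : ℕ} {b : Bool} (h : u[j]? = some b) :
    j < u.length := by
  by_contra hc
  rw [getElem?_eq_none (by omega)] at h; simp at h

lemma pw_two (u : List Bool) : pw u 2 = u ++ u := by
  rw [pw_succ, pw_succ, pw_zero, append_nil]

lemma pw_nil (k : ℕ) : pw ([] : List Bool) k = [] := by
  induction k with
  | zero => rfl
  | succ k ih => rw [pw_succ]; simpa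

lemma cycff_pw {v : List Bool} {k : ℕ} (hk : 0 < k) : CycFF (pw v k) ↔ CycFF v := by
  rcases Nat.eq_zero_or_pos v.length with hd | hd
  · have hv : v = [] := eq_nil_of_length_eq_zero hd
    subst hv
    rw [pw_nil]
  have hn : (pw v k).length = k * v.length := length_pw _ _
  constructor
  · rintro ⟨a, h1, h2⟩
    have ha : a < k * v.length := hn ▸ lt_len_of_some h1
    refine ⟨a % v.length, ?_, ?_⟩
    · rw [← getElem?_pw ha]; exact h1
    · rw [hn] at h2
      have h3 : (a + 1) % (k * v.length) < k * v.length := Nat.mod_lt _ (by omega)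
      rw [getElem?_pw h3, Nat.mod_mod_of_dvd _ ⟨k, by ring⟩, ← Nat.mod_add_mod] at h2
      exact h2
  · rintro ⟨a, h1, h2⟩
    have ha : a < v.length := lt_len_of_some h1
    have hak : a < k * v.length := Nat.lt_of_lt_of_le ha (Nat.le_mul_of_pos_left _ hk)
    refine ⟨a, ?_, ?_⟩
    · rw [getElem?_pw hak, Nat.mod_eq_of_lt ha]; exact h1
    · have h3 : (a + 1) % (k * v.length) < k * v.length := Nat.mod_lt _ (by omega)
      rw [hn, getElem?_pw h3, Nat.mod_mod_of_dvd _ ⟨k, by ring⟩]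
      exact h2

lemma sq_iff_cyc (u : List Bool) : [false, false] <:+: u ++ u ↔ CycFF u := by
  rcases Nat.eq_zero_or_pos u.length with hd | hd
  · have hv : u = [] := eq_nil_of_length_eq_zero hd
    subst hv
    simp only [append_nil]
    constructor
    · rintro ⟨s, t, h⟩
      have := congrArg List.length h
      simp at this
    · rintro ⟨a, h1, _⟩
      simp at h1
  rw [← pw_two, pair_infix_iff]
  constructor
  · rintro ⟨j, h1, h2⟩
    have hj1 : j + 1 < 2 * u.length := (length_pw u 2) ▸ lt_len_of_some h2
    refine ⟨j % u.length, ?_, ?_⟩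
    · rw [← getElem?_pw (show j < 2 * u.length by omega)]; exact h1
    · rw [Nat.mod_add_mod, ← getElem?_pw hj1]; exact h2
  · rintro ⟨a, h1, h2⟩
    have ha : a < u.length := lt_len_of_some h1
    refine ⟨a, ?_, ?_⟩
    · rw [getElem?_pw (show a < 2 * u.length by omega), Nat.mod_eq_of_lt ha]; exact h1
    · rw [getElem?_pw (show a + 1 < 2 * u.length by omega)]; exact h2

lemma cycff_rotate {v : List Bool} {i : ℕ} (h : CycFF (v.rotate i)) : CycFF v := by
  obtain ⟨a, h1, h2⟩ := h
  have ha : a < v.length := (length_rotate v i) ▸ lt_len_of_some h1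
  have hd : 0 < v.length := by omega
  rw [getElem?_rotate' ha] at h1
  rw [length_rotate, getElem?_rotate' (Nat.mod_lt _ hd)] at h2
  refine ⟨(a + i) % v.length, h1, ?_⟩
  rw [Nat.mod_add_mod]
  rwa [Nat.mod_add_mod, Nat.add_right_comm] at h2

lemma rot_shift_len {t : List Bool} (c : ℕ) : t.rotate (c + t.length) = t.rotate c := by
  rw [← rotate_rotate, ← length_rotate t c, rotate_length]

lemma rot_cancel {t : List Bool} {a b : ℕ} (hab : a < b) (hb : b < t.length)
    (h : t.rotate a = t.rotate b) : t.rotate (b - a) = t := by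
  have h1 : t = (t.rotate a).rotate (t.length - a) := by
    rw [rotate_rotate, Nat.add_sub_cancel' (by omega), rotate_length]
  have h2 : (t.rotate b).rotate (t.length - a) = t.rotate (b - a) := by
    rw [rotate_rotate]
    have : b + (t.length - a) = (b - a) + t.length := by omega
    rw [this, rot_shift_len]
  conv_lhs => rw [← h2, ← h, ← h1]

lemma lyndon_rot_ne {w : List Bool} (hw : IsLyndon w) {c : ℕ} (hc : 0 < c)
    (hcd : c < w.length) : w.rotate c ≠ w := fun h => absurd (h ▸ hw c hc hcd) (lt_irrefl _)

lemma rot_inj_lyndon {w : List Bool} (hw : IsLyndon w) {i i' : ℕ} (hi : i < w.length)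
    (hi' : i' < w.length) (h : w.rotate i = w.rotate i') : i = i' := by
  by_contra hne
  rcases Nat.lt_or_ge i i' with hlt | hge
  · exact lyndon_rot_ne hw (by omega) (by omega) (rot_cancel hlt hi' h)
  · have hlt : i' < i := by omega
    exact lyndon_rot_ne hw (by omega) (by omega) (rot_cancel hlt hi h.symm)

lemma lt_of_two {u v : List Bool} {c : Bool} (h0 : u[0]? = some c) (h0' : v[0]? = some c)
    (h1 : u[1]? = some false) (h1' : v[1]? = some true) : u < v := by
  match u, v with
  | [], _ => simp at h0
  | [_], _ => simp at h1
  | _, [] => simp at h0'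
  | _, [_] => simp at h1'
  | a :: b :: u', a' :: b' :: v' =>
    simp only [getElem?_cons_zero, getElem?_cons_succ, Option.some_inj] at h0 h0' h1 h1'
    subst h0 h0' h1 h1'
    exact List.Lex.cons (List.Lex.rel (by exact Bool.false_lt_true))

lemma mod_shift_ne {c d j : ℕ} (hc : 0 < c) (hcd : c < d) (hj : j < d) :
    (j + c) % d ≠ j := by
  rcases Nat.lt_or_ge (j + c) d with h | h
  · rw [Nat.mod_eq_of_lt h]; omega
  · rw [Nat.mod_eq_sub_mod h, Nat.mod_eq_of_lt (by omega)]; omega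

lemma rot_back {a b : List Bool} {ia ib : ℕ} (hia : ia ≤ a.length)
    (hab : a.rotate ia = b.rotate ib) : a = b.rotate (ib + (a.length - ia)) := by
  rw [← rotate_rotate, ← hab, rotate_rotate, Nat.add_sub_cancel' hia, rotate_length]

lemma lyndon_unique {w w' : List Bool} (hw : IsLyndon w) (hw' : IsLyndon w')
    {i i' : ℕ} (hi : i < w.length) (hi' : i' < w'.length)
    (h : w.rotate i = w'.rotate i') : w = w' ∧ i = i' := by
  have hlen : w'.length = w.length := by
    have := congrArg List.length h
    simp only [length_rotate] at this
    omega
  have hd0 : 0 < w.length := by omega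
  have hc1 : w = w'.rotate ((i' + (w.length - i)) % w'.length) := by
    rw [rotate_mod]
    exact rot_back (le_of_lt hi) h
  have hc2 : w' = w.rotate ((i + (w'.length - i')) % w.length) := by
    rw [rotate_mod]
    exact rot_back (le_of_lt hi') h.symm
  by_cases hc : (i' + (w.length - i)) % w'.length = 0
  · rw [hc, rotate_zero] at hc1
    subst hc1
    exact ⟨rfl, rot_inj_lyndon hw hi hi' h⟩
  · have hba : w' < w := by
      have := hw' _ (Nat.pos_of_ne_zero hc) (Nat.mod_lt _ (by omega))
      rw [← hc1] at this
      exact this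
    have hc2ne : (i + (w'.length - i')) % w.length ≠ 0 := by
      intro h0
      rw [h0, rotate_zero] at hc2
      subst hc2
      have := rot_inj_lyndon hw hi hi' h
      subst this
      rw [Nat.add_sub_cancel' (le_of_lt hi), Nat.mod_self] at hc
      exact hc rfl
    have hab : w < w' := by
      have := hw _ (Nat.pos_of_ne_zero hc2ne) (Nat.mod_lt _ hd0)
      rw [← hc2] at this
      exact this
    exact absurd hab (asymm hba)

lemma lyndon_not_cycff {w : List Bool} (hw : IsLyndon w) (h2 : 2 ≤ w.length)
    (hff : ¬ [false, false] <:+: w) : ¬ CycFF w := by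
  rintro ⟨a, ha1, ha2⟩
  set d := w.length with hd
  have had : a < d := lt_len_of_some ha1
  rcases Nat.lt_or_ge (a + 1) d with h | h
  · rw [Nat.mod_eq_of_lt h] at ha2
    exact hff (pair_infix_iff.mpr ⟨a, ha1, ha2⟩)
  · have haeq : a = d - 1 := by omega
    have hmod : (a + 1) % d = 0 := by
      have : a + 1 = d := by omega
      simp [this]
    rw [hmod] at ha2
    -- w[d-1] = false, w[0] = false; w[1] must be true
    obtain ⟨b, hb⟩ : ∃ b, w[1]? = some b := by
      have : 1 < w.length := by omega
      exact ⟨w[1]'this, getElem?_eq_getElem this⟩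
    have hbt : b = true := by
      by_contra hbf
      have : b = false := by cases b <;> simp_all
      subst this
      exact hff (pair_infix_iff.mpr ⟨0, ha2, hb⟩)
    subst hbt
    -- the rotation by d-1 starts with [false, false]
    have hlt := hw (d - 1) (by omega) (by omega)
    have hr0 : (w.rotate (d-1))[0]? = some false := by
      rw [getElem?_rotate' (by omega), Nat.zero_add, Nat.mod_eq_of_lt (by omega), ← haeq]
      exact ha1
    have hr1 : (w.rotate (d-1))[1]? = some false := by
      rw [getElem?_rotate' (by omega)]
      have : (1 + (d - 1)) % d = 0 := by
        have : 1 + (d - 1) = d := by omega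
        simp [this]
      rw [this]
      exact ha2
    have : w.rotate (d - 1) < w := lt_of_two hr0 ha2 hr1 hb
    exact absurd hlt (asymm this)

def FL : ℕ → Finset (List Bool)
  | 0 => {[]}
  | (m+1) => (FL m).image (true :: ·) ∪ (FL m).image (false :: ·)

lemma mem_FL : ∀ m (u : List Bool), u ∈ FL m ↔ u.length = m
  | 0, u => by
    cases u <;> simp [FL]
  | (m+1), u => by
    cases u with
    | nil => simp [FL]
    | cons c x =>
      simp only [FL, Finset.mem_union, Finset.mem_image, length_cons]
      constructor
      · rintro (⟨y, hy, he⟩ | ⟨y, hy, he⟩) <;>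
          · injection he with h1 h2
            subst h1; subst h2
            simpa using (mem_FL m y).mp hy
      · intro hx
        have hx' : x ∈ FL m := (mem_FL m x).mpr (by omega)
        cases c
        · exact Or.inr ⟨x, hx', rfl⟩
        · exact Or.inl ⟨x, hx', rfl⟩

def NF (m : ℕ) : Finset (List Bool) :=
  (FL m).filter (fun x => ¬ [false, false] <:+: x)

def NFT (m : ℕ) : Finset (List Bool) :=
  (FL m).filter (fun x => ¬ [false, false] <:+: x ∧ x[0]? ≠ some false)

lemma singleton_prefix {x : List Bool} {b : Bool} : [b] <+: x ↔ x[0]? = some b := by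
  cases x with
  | nil => simp
  | cons c y => simp [List.cons_prefix_cons, eq_comm]

lemma ff_cons_iff {c : Bool} {x : List Bool} :
    [false, false] <:+: (c :: x) ↔ [false, false] <:+: x ∨ (c = false ∧ x[0]? = some false) := by
  rw [List.infix_cons_iff]
  constructor
  · rintro (h | h)
    · right
      rcases h with ⟨t, ht⟩
      cases ht
      exact ⟨rfl, singleton_prefix.mp ⟨t, by simp⟩⟩
    · exact Or.inl h
  · rintro (h | ⟨rfl, h⟩)
    · exact Or.inr h
    · left
      obtain ⟨t, ht⟩ := singleton_prefix.mpr h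
      exact ⟨t, by rw [← ht]; simp⟩

lemma NF_succ (m : ℕ) :
    NF (m+1) = (NF m).image (true :: ·) ∪ (NFT m).image (false :: ·) := by
  ext u
  simp only [NF, NFT, Finset.mem_union, Finset.mem_image, Finset.mem_filter, mem_FL]
  constructor
  · rintro ⟨hlen, hff⟩
    cases u with
    | nil => simp at hlen
    | cons c x =>
      rw [ff_cons_iff] at hff
      push_neg at hff
      cases c
      · exact Or.inr ⟨x, ⟨⟨by simpa using hlen, hff.1, hff.2 rfl⟩, rfl⟩⟩
      · exact Or.inl ⟨x, ⟨⟨by simpa using hlen, hff.1⟩, rfl⟩⟩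
  · rintro (⟨x, ⟨⟨hl, hf⟩, rfl⟩⟩ | ⟨x, ⟨⟨hl, hf, hh⟩, rfl⟩⟩)
    · refine ⟨by simpa using hl, ?_⟩
      rw [ff_cons_iff]
      push_neg
      exact ⟨hf, by simp⟩
    · refine ⟨by simpa using hl, ?_⟩
      rw [ff_cons_iff]
      push_neg
      exact ⟨hf, fun _ => hh⟩

lemma NFT_succ (m : ℕ) : NFT (m+1) = (NF m).image (true :: ·) := by
  ext u
  simp only [NF, NFT, Finset.mem_image, Finset.mem_filter, mem_FL]
  constructor
  · rintro ⟨hlen, hff, hh⟩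
    cases u with
    | nil => simp at hlen
    | cons c x =>
      rw [ff_cons_iff] at hff
      push_neg at hff
      cases c
      · simp at hh
      · exact ⟨x, ⟨⟨by simpa using hlen, hff.1⟩, rfl⟩⟩
  · rintro ⟨x, ⟨⟨hl, hf⟩, rfl⟩⟩
    refine ⟨by simpa using hl, ?_, by simp⟩
    rw [ff_cons_iff]
    push_neg
    exact ⟨hf, by simp⟩

lemma card_NF : ∀ m, (NF m).card = Nat.fib (m + 2) ∧ (NFT m).card = Nat.fib (m + 1)
  | 0 => by constructor <;> decide
  | 1 => by constructor <;> decide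
  | (m+2) => by
    have ih1 := card_NF (m+1)
    have ih0 := card_NF m
    have hinj : ∀ b : Bool, Function.Injective (b :: · : List Bool → List Bool) := by
      intro b x y h; simpa using h
    constructor
    · rw [NF_succ]
      rw [Finset.card_union_of_disjoint]
      · rw [Finset.card_image_of_injective _ (hinj true),
          Finset.card_image_of_injective _ (hinj false), ih1.1, ih1.2]
        have h := Nat.fib_add_two (n := m+2)
        simp only [show m+1+2=m+3 by omega, show m+1+1=m+2 by omega,
          show m+2+2=m+4 by omega, show m+2+1=m+3 by omega] at *
        omega
      · rw [Finset.disjoint_left]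
        intro u hu hv
        simp only [Finset.mem_image] at hu hv
        obtain ⟨x, _, rfl⟩ := hu
        obtain ⟨y, _, hy⟩ := hv
        simp at hy
    · rw [NFT_succ, Finset.card_image_of_injective _ (hinj true), ih1.1]

lemma count_eq_card_filter (l : List Bool) (b : Bool) :
    ((Finset.range l.length).filter (fun i => l[i]? = some b)).card = l.count b := by
  induction l using List.reverseRecOn with
  | nil => simp
  | append_singleton l a ih =>
    rw [length_append, length_cons]
    simp only [length_nil, Nat.zero_add]
    rw [Finset.range_add_one, Finset.filter_insert]
    have hget : ∀ i, i < l.length → (l ++ [a])[i]? = l[i]? := by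
      intro i hi
      rw [getElem?_append_left hi]
    have hfilter : (Finset.range l.length).filter (fun i => (l ++ [a])[i]? = some b) =
        (Finset.range l.length).filter (fun i => l[i]? = some b) := by
      apply Finset.filter_congr
      intro i hi
      rw [Finset.mem_range] at hi
      simp [hget i hi]
    have hlast : (l ++ [a])[l.length]? = some a := by
      rw [getElem?_append_right le_rfl]
      simp
    rw [count_append]
    by_cases hab : a = b
    · subst hab
      rw [if_pos hlast, Finset.card_insert_of_notMem (by simp), hfilter, ih]
      simp
    · rw [if_neg (by rw [hlast]; simpa using hab), hfilter, ih]
      simp [count_singleton', hab]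

lemma cycff_true_cons {x : List Bool} :
    CycFF (true :: x) ↔ [false, false] <:+: x := by
  constructor
  · rintro ⟨a, h1, h2⟩
    have ha : a < x.length + 1 := by simpa using lt_len_of_some h1
    cases a with
    | zero => simp at h1
    | succ a' =>
      rw [getElem?_cons_succ] at h1
      have hlen : (true :: x).length = x.length + 1 := rfl
      rw [hlen] at h2
      have hne : (a' + 1 + 1) % (x.length + 1) ≠ 0 := by
        intro h0
        rw [h0] at h2
        simp at h2
      have hlt : a' + 1 + 1 < x.length + 1 := by
        rcases Nat.lt_or_ge (a' + 1 + 1) (x.length + 1) with h | h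
        · exact h
        · exfalso
          have : a' + 1 + 1 = x.length + 1 := by omega
          rw [this, Nat.mod_self] at hne
          exact hne rfl
      rw [Nat.mod_eq_of_lt hlt, getElem?_cons_succ] at h2
      exact pair_infix_iff.mpr ⟨a', h1, h2⟩
  · intro h
    obtain ⟨j, h1, h2⟩ := pair_infix_iff.mp h
    have hj1 : j + 1 < x.length := lt_len_of_some h2
    refine ⟨j + 1, by simpa using h1, ?_⟩
    have : (j + 1 + 1) % (true :: x).length = j + 1 + 1 := by
      apply Nat.mod_eq_of_lt
      simp
      omega
    rw [this]
    simpa using h2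

lemma T'_eq (m : ℕ) :
    (FL (m+1)).filter (fun u => u[0]? = some true ∧ ¬ [false, false] <:+: u ++ u) =
      (NF m).image (true :: ·) := by
  ext u
  simp only [Finset.mem_filter, Finset.mem_image, mem_FL, NF]
  constructor
  · rintro ⟨hlen, hh, hff⟩
    cases u with
    | nil => simp at hh
    | cons c x =>
      have hc : c = true := by simpa using hh
      subst hc
      rw [sq_iff_cyc, cycff_true_cons] at hff
      exact ⟨x, ⟨by simpa using hlen, hff⟩, rfl⟩
  · rintro ⟨x, ⟨hl, hf⟩, rfl⟩
    refine ⟨by simpa using hl, by simp, ?_⟩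
    rw [sq_iff_cyc, cycff_true_cons]
    exact hf

lemma rot_ne_rot {w : List Bool} (hw : IsLyndon w) {a b : ℕ} (ha : a < w.length)
    (hb : b < w.length) (hne : a ≠ b) : w.rotate a ≠ w.rotate b := by
  intro h
  rcases Nat.lt_or_ge a b with hlt | hge
  · exact lyndon_rot_ne hw (by omega) (by omega) (rot_cancel hlt hb h)
  · have hlt : b < a := by omega
    exact lyndon_rot_ne hw (by omega) (by omega) (rot_cancel hlt ha h.symm)

lemma prim_rot {w : List Bool} (hw : IsLyndon w) {i c : ℕ} (hi : i < w.length)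
    (hc : 0 < c) (hcd : c < w.length) : (w.rotate i).rotate c ≠ w.rotate i := by
  intro h
  rw [rotate_rotate] at h
  have h' : w.rotate ((i + c) % w.length) = w.rotate i := by
    rw [rotate_mod]; exact h
  exact rot_ne_rot hw (Nat.mod_lt _ (by omega)) hi (mod_shift_ne hc hcd hi) h'

lemma pw_take {v : List Bool} {k : ℕ} (hk : 0 < k) : (pw v k).take v.length = v := by
  obtain ⟨k', rfl⟩ : ∃ k', k = k' + 1 := ⟨k - 1, by omega⟩
  rw [pw_succ, take_left]

lemma mem_of_mem_pw {v : List Bool} {k : ℕ} {b : Bool} (h : b ∈ pw v k) : b ∈ v := by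
  rw [pw, mem_flatten] at h
  obtain ⟨l, hl, hb⟩ := h
  rwa [eq_of_mem_replicate hl] at hb

lemma eq_replicate_of_not_false {u : List Bool} (h : false ∉ u) :
    u = List.replicate u.length true := by
  rw [List.eq_replicate_iff]
  exact ⟨rfl, fun b hb => by cases b; exact absurd hb h; rfl⟩

lemma rotate_fix_of_take {u : List Bool} {g : ℕ} (hg : 0 < g) (hgu : g ∣ u.length)
    (hr : u.rotate g = u) {d : ℕ} (hgd : g ∣ d) (hdu : d ≤ u.length) :
    (u.take d).rotate g = u.take d := by
  rcases Nat.eq_zero_or_pos d with rfl | hd0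
  · simp
  have htl : (u.take d).length = d := by rw [length_take]; omega
  have hper := per_of_rotate hg hr
  apply List.ext_getElem?
  intro j
  rcases lt_or_ge j d with hj | hj
  · rw [getElem?_rotate' (by omega : j < (u.take d).length), htl]
    rw [getElem?_take, if_pos (Nat.mod_lt _ hd0), getElem?_take, if_pos hj]
    rw [hper ((j+g) % d) (by have := Nat.mod_lt (j+g) hd0; omega), hper j (by omega),
      Nat.mod_mod_of_dvd _ hgd, Nat.add_mod_right]
  · rw [getElem?_eq_none (by rw [length_rotate]; omega), getElem?_eq_none (by omega)]

lemma pw_single (b : Bool) (k : ℕ) : pw [b] k = List.replicate k b := by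
  induction k with
  | zero => rfl
  | succ k ih => rw [pw_succ, ih, List.replicate_succ]; rfl

lemma rot_fix_of_eq_pw {u v : List Bool} {k : ℕ} (hk : 0 < k) (h : u = pw v k) :
    u.rotate v.length = u := by
  rw [h, rotate_pw_self hk]

lemma take_of_eq_pw {u v : List Bool} {k : ℕ} (hk : 0 < k) (h : u = pw v k) :
    u.take v.length = v := by
  rw [h, pw_take hk]

lemma pw_rot_inj {n : ℕ} (hn : 0 < n) {w w' : List Bool} (hw : IsLyndon w) (hw' : IsLyndon w')
    (hdn : w.length ∣ n) (hd'n : w'.length ∣ n) (hd2 : 0 < w.length) (hd'2 : 0 < w'.length)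
    {i i' : ℕ} (hi : i < w.length) (hi' : i' < w'.length)
    (h : pw (w.rotate i) (n / w.length) = pw (w'.rotate i') (n / w'.length)) :
    w = w' ∧ i = i' := by
  set d := w.length with hd
  set d' := w'.length with hd'
  set u := pw (w.rotate i) (n / w.length) with hu
  have hk : 0 < n / d := Nat.div_pos (Nat.le_of_dvd hn hdn) hd2
  have hk' : 0 < n / d' := Nat.div_pos (Nat.le_of_dvd hn hd'n) hd'2
  have hulen : u.length = n := by
    rw [hu, length_pw, length_rotate, ← hd, Nat.div_mul_cancel hdn]
  have hrotd : u.rotate d = u := by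
    have := rot_fix_of_eq_pw hk hu
    rwa [length_rotate] at this
  have hrotd' : u.rotate d' = u := by
    have := rot_fix_of_eq_pw hk' h
    rwa [length_rotate] at this
  have hgcd : u.rotate (Nat.gcd d d') = u := rot_gcd u d d' hrotd hrotd'
  have hgpos : 0 < Nat.gcd d d' := Nat.gcd_pos_of_pos_left _ hd2
  have hgn : Nat.gcd d d' ∣ n := (Nat.gcd_dvd_left d d').trans hdn
  have htake : u.take d = w.rotate i := by
    have := take_of_eq_pw hk hu
    rwa [length_rotate] at this
  have htake' : u.take d' = w'.rotate i' := by
    have := take_of_eq_pw hk' h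
    rwa [length_rotate] at this
  have hgd : Nat.gcd d d' = d := by
    by_contra hne
    have hlt : Nat.gcd d d' < d := lt_of_le_of_ne (Nat.le_of_dvd hd2 (Nat.gcd_dvd_left _ _)) hne
    have := rotate_fix_of_take hgpos (hulen ▸ hgn) hgcd (Nat.gcd_dvd_left d d')
      (hulen ▸ Nat.le_of_dvd hn hdn)
    rw [htake] at this
    exact prim_rot hw hi hgpos hlt this
  have hgd' : Nat.gcd d d' = d' := by
    by_contra hne
    have hlt : Nat.gcd d d' < d' := lt_of_le_of_ne (Nat.le_of_dvd hd'2 (Nat.gcd_dvd_right _ _)) hne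
    have := rotate_fix_of_take hgpos (hulen ▸ hgn) hgcd (Nat.gcd_dvd_right d d')
      (hulen ▸ Nat.le_of_dvd hn hd'n)
    rw [htake'] at this
    exact prim_rot hw' hi' hgpos hlt this
  have hdd' : d = d' := by rw [← hgd, hgd']
  have hvv' : w.rotate i = w'.rotate i' := by
    rw [← htake, ← htake', hdd']
  exact lyndon_unique hw hw' hi hi' hvv'

lemma Phi_props {n : ℕ} (hn : 2 ≤ n) {w : List Bool} (hw : IsLyndon w) (hdn : w.length ∣ n)
    (hd2 : 2 ≤ w.length) (hfw : false ∈ w) (hffw : ¬ [false, false] <:+: w)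
    {i : ℕ} (hi : i < w.length) (hit : w[i]? = some true) :
    (pw (w.rotate i) (n / w.length)).length = n ∧
    (pw (w.rotate i) (n / w.length))[0]? = some true ∧
    ¬ [false, false] <:+: (pw (w.rotate i) (n / w.length)) ++ (pw (w.rotate i) (n / w.length)) ∧
    pw (w.rotate i) (n / w.length) ≠ List.replicate n true := by
  set d := w.length with hd
  have hd0 : 0 < d := by omega
  have hn0 : 0 < n := by omega
  have hk : 0 < n / d := Nat.div_pos (Nat.le_of_dvd hn0 hdn) hd0
  set v := w.rotate i with hv
  have hvlen : v.length = d := length_rotate w i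
  have hulen : (pw v (n / d)).length = n := by
    rw [length_pw, hvlen, Nat.div_mul_cancel hdn]
  refine ⟨hulen, ?_, ?_, ?_⟩
  · rw [getElem?_pw (by rw [hvlen]; exact Nat.lt_of_lt_of_le hd0 (Nat.le_mul_of_pos_left _ hk)),
      hvlen, Nat.zero_mod, hv, getElem?_rotate' hd0, Nat.zero_add, ← hd, Nat.mod_eq_of_lt hi]
    exact hit
  · rw [sq_iff_cyc, cycff_pw hk]
    intro hcv
    exact lyndon_not_cycff hw hd2 hffw (cycff_rotate hcv)
  · intro heq
    have hfv : false ∈ v := (mem_rotate).mpr hfw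
    have hfu : false ∈ pw v (n / d) := by
      obtain ⟨k', hk'⟩ : ∃ k', n / d = k' + 1 := ⟨n / d - 1, by omega⟩
      rw [hk', pw_succ, mem_append]
      exact Or.inl hfv
    rw [heq] at hfu
    exact absurd (eq_of_mem_replicate hfu) (by simp)

lemma Phi_surj {n : ℕ} (hn : 2 ≤ n) {u : List Bool} (hulen : u.length = n)
    (hu0 : u[0]? = some true) (hffu : ¬ [false, false] <:+: u ++ u)
    (hune : u ≠ List.replicate n true) :
    ∃ w i, IsLyndon w ∧ w.length ∣ n ∧ 2 ≤ w.length ∧ false ∈ w ∧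
      ¬ [false, false] <:+: w ∧ i < w.length ∧ w[i]? = some true ∧
      pw (w.rotate i) (n / w.length) = u := by
  have hn0 : 0 < n := by omega
  have hP : ∃ m, 0 < m ∧ u.rotate m = u := ⟨n, hn0, by rw [← hulen, rotate_length]⟩
  classical
  set g := Nat.find hP with hg
  have hgpos : 0 < g := (Nat.find_spec hP).1
  have hgrot : u.rotate g = u := (Nat.find_spec hP).2
  have hgle : g ≤ n := Nat.find_min' hP ⟨hn0, by rw [← hulen, rotate_length]⟩
  have hgdvd : g ∣ n := by
    have hrotg : u.rotate (Nat.gcd n g) = u :=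
      rot_gcd u n g (by rw [← hulen, rotate_length]) hgrot
    have hgcdpos : 0 < Nat.gcd n g := Nat.gcd_pos_of_pos_left _ hn0
    have hgcdle : Nat.gcd n g ≤ g := Nat.le_of_dvd hgpos (Nat.gcd_dvd_right n g)
    have : Nat.gcd n g = g := by
      by_contra hlt
      exact Nat.find_min hP (by omega : Nat.gcd n g < g) ⟨hgcdpos, hrotg⟩
    rw [← this]
    exact Nat.gcd_dvd_left n g
  set t := u.take g with ht
  have htlen : t.length = g := by rw [ht, length_take]; omega
  have hu : u = pw t (n / g) := by
    have := eq_pw_of_rotate hgpos (hulen ▸ hgdvd) hgrot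
    rwa [hulen] at this
  have hk : 0 < n / g := Nat.div_pos hgle hgpos
  have hprim : ∀ c, 0 < c → c < g → t.rotate c ≠ t := by
    intro c hc hcg heq
    have hru : u.rotate c = u := by
      conv_lhs => rw [hu]
      rw [rotate_pw_comm, heq, ← hu]
    exact Nat.find_min hP hcg ⟨hc, hru⟩
  obtain ⟨j₀, hj₀mem, hmin⟩ := Finset.exists_min_image (Finset.range g)
    (fun j => t.rotate j) ⟨0, Finset.mem_range.mpr hgpos⟩
  rw [Finset.mem_range] at hj₀mem
  set w := t.rotate j₀ with hwdef
  have hwlen : w.length = g := by rw [hwdef, length_rotate, htlen]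
  have hLyn : IsLyndon w := by
    intro c hc hcw
    rw [hwlen] at hcw
    have h1 : w.rotate c = t.rotate ((j₀ + c) % g) := by
      rw [hwdef, rotate_rotate, ← htlen, rotate_mod]
    have hle : w ≤ w.rotate c := by
      rw [h1]
      exact hmin _ (Finset.mem_range.mpr (Nat.mod_lt _ hgpos))
    refine lt_of_le_of_ne hle ?_
    intro heq
    have heq2 : t.rotate j₀ = t.rotate ((j₀ + c) % g) := by rw [← h1, ← heq, hwdef]
    have hne2 : (j₀ + c) % g ≠ j₀ := mod_shift_ne hc hcw hj₀mem
    rcases Nat.lt_or_ge j₀ ((j₀ + c) % g) with hlt | hge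
    · have := rot_cancel hlt (by rw [htlen]; exact Nat.mod_lt _ hgpos) heq2
      exact hprim _ (by omega) (by have := Nat.mod_lt (j₀ + c) hgpos; omega) this
    · have hlt : (j₀ + c) % g < j₀ := by omega
      have := rot_cancel hlt (by rw [htlen]; exact hj₀mem) heq2.symm
      exact hprim _ (by omega) (by omega) this
  set i := if j₀ = 0 then 0 else g - j₀ with hidef
  have hig : i < g := by rw [hidef]; split <;> omega
  have hwi : w.rotate i = t := by
    rw [hidef]
    split
    · next h0 => rw [hwdef, h0, rotate_zero, rotate_zero]
    · next h0 =>
      rw [hwdef, rotate_rotate, Nat.add_sub_cancel' (le_of_lt hj₀mem), ← htlen, rotate_length]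
  have ht0 : t[0]? = some true := by
    rw [ht, getElem?_take, if_pos hgpos]
    exact hu0
  have hg2 : 2 ≤ g := by
    rcases Nat.lt_or_ge g 2 with h | h
    · exfalso
      have hg1 : g = 1 := by omega
      have ht1 : t = [true] := by
        have hlt : t.length = 1 := by rw [htlen, hg1]
        apply List.ext_getElem?
        intro j
        cases j with
        | zero => rw [ht0]; rfl
        | succ j => rw [getElem?_eq_none (by omega), getElem?_eq_none (by simp)]
      apply hune
      rw [hu, hg1, ht1, Nat.div_one, pw_single]
    · exact h
  have hfu : false ∈ u := by
    by_contra hf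
    exact hune (hulen ▸ eq_replicate_of_not_false hf)
  have hfw : false ∈ w := by
    rw [hwdef, mem_rotate]
    exact mem_of_mem_pw (hu ▸ hfu)
  have hffw : ¬ [false, false] <:+: w := by
    intro hff
    obtain ⟨j, h1, h2⟩ := pair_infix_iff.mp hff
    have hj1 : j + 1 < g := hwlen ▸ lt_len_of_some h2
    have hcw : CycFF w := ⟨j, h1, by rw [hwlen, Nat.mod_eq_of_lt hj1]; exact h2⟩
    have hct : CycFF t := cycff_rotate (hwdef ▸ hcw)
    have hcu : CycFF u := by
      rw [hu]
      exact (cycff_pw hk).mpr hct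
    exact hffu ((sq_iff_cyc u).mpr hcu)
  have hwit : w[i]? = some true := by
    have : (w.rotate i)[0]? = w[(0 + i) % w.length]? := getElem?_rotate' (by rw [hwlen]; omega)
    rw [hwi, Nat.zero_add, hwlen, Nat.mod_eq_of_lt hig] at this
    rw [← this]
    exact ht0
  exact ⟨w, i, hLyn, hwlen ▸ hgdvd, hwlen ▸ hg2, hfw, hffw, hwlen ▸ hig, hwit,
    by rw [hwi, hwlen, ← hu]⟩

/-- For `n ≥ 2`, the number of 1's in the concatenation `ℓ₁` of all binary
Lyndon words of length `d ∣ n`, `d ≥ 2`, containing `0` but not `00`, is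
`F_{n+1} - 1`. -/
theorem count_ones_ell_one (n : ℕ) (hn : 2 ≤ n)
    (L : List (List Bool)) (hnd : L.Nodup)
    (hmem : ∀ w, w ∈ L ↔
      IsLyndon w ∧ w.length ∣ n ∧ 2 ≤ w.length ∧ false ∈ w ∧
        ¬ [false, false] <:+: w) :
    L.flatten.count true = Nat.fib (n + 1) - 1 := by
  classical
  have hn0 : 0 < n := by omega
  set F : List Bool → Finset (List Bool) := fun w =>
    ((Finset.range w.length).filter (fun i => w[i]? = some true)).image
      (fun i => pw (w.rotate i) (n / w.length)) with hF
  set T : Finset (List Bool) := (FL n).filter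
    (fun u => u[0]? = some true ∧ ¬ [false, false] <:+: u ++ u ∧ u ≠ List.replicate n true)
    with hT
  have hTbi : T = L.toFinset.biUnion F := by
    ext u
    simp only [hT, hF, Finset.mem_biUnion, Finset.mem_filter, Finset.mem_image,
      List.mem_toFinset, Finset.mem_range, mem_FL]
    constructor
    · rintro ⟨hlen, h0, hsq, hne⟩
      obtain ⟨w, i, h1, h2, h3, h4, h5, h6, h7, h8⟩ := Phi_surj hn hlen h0 hsq hne
      exact ⟨w, (hmem w).mpr ⟨h1, h2, h3, h4, h5⟩, i, ⟨h6, h7⟩, h8⟩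
    · rintro ⟨w, hwL, i, ⟨hi, hit⟩, rfl⟩
      obtain ⟨h1, h2, h3, h4, h5⟩ := (hmem w).mp hwL
      obtain ⟨p1, p2, p3, p4⟩ := Phi_props hn h1 h2 h3 h4 h5 hi hit
      exact ⟨p1, p2, p3, p4⟩
  have hprops : ∀ w ∈ L, IsLyndon w ∧ w.length ∣ n ∧ 2 ≤ w.length := by
    intro w hw
    obtain ⟨a, b, c, _, _⟩ := (hmem w).mp hw
    exact ⟨a, b, c⟩
  have hdisj : ∀ w ∈ L.toFinset, ∀ w' ∈ L.toFinset, w ≠ w' → Disjoint (F w) (F w') := by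
    intro w hw w' hw' hne
    rw [Finset.disjoint_left]
    intro u hu hu'
    simp only [hF, Finset.mem_image, Finset.mem_filter, Finset.mem_range] at hu hu'
    obtain ⟨i, ⟨hi, _⟩, hui⟩ := hu
    obtain ⟨i', ⟨hi', _⟩, hui'⟩ := hu'
    rw [List.mem_toFinset] at hw hw'
    obtain ⟨l1, l2, l3⟩ := hprops w hw
    obtain ⟨m1, m2, m3⟩ := hprops w' hw'
    exact hne (pw_rot_inj hn0 l1 m1 l2 m2 (by omega) (by omega) hi hi'
      (by rw [hui, hui'])).1
  have hFcard : ∀ w ∈ L.toFinset, (F w).card = w.count true := by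
    intro w hw
    rw [List.mem_toFinset] at hw
    obtain ⟨l1, l2, l3⟩ := hprops w hw
    rw [hF]
    simp only
    rw [Finset.card_image_of_injOn, count_eq_card_filter]
    intro i hi i' hi' heq
    simp only [Finset.coe_filter, Finset.mem_range, Set.mem_setOf_eq] at hi hi'
    exact (pw_rot_inj hn0 l1 l1 l2 l2 (by omega) (by omega) hi.1 hi'.1 heq).2
  have hT' : T = ((FL n).filter
      (fun u => u[0]? = some true ∧ ¬ [false, false] <:+: u ++ u)).erase
      (List.replicate n true) := by
    ext u
    simp only [hT, Finset.mem_erase, Finset.mem_filter]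
    tauto
  have hrepmem : List.replicate n true ∈ (FL n).filter
      (fun u => u[0]? = some true ∧ ¬ [false, false] <:+: u ++ u) := by
    rw [Finset.mem_filter, mem_FL]
    refine ⟨List.length_replicate, ?_, ?_⟩
    · rw [List.getElem?_replicate, if_pos hn0]
    · intro h
      rw [← List.replicate_add] at h
      have := h.subset (by simp : false ∈ [false, false])
      exact absurd (eq_of_mem_replicate this) (by simp)
  obtain ⟨m, rfl⟩ : ∃ m, n = m + 1 := ⟨n - 1, by omega⟩
  have hTcard : T.card = Nat.fib (m + 2) - 1 := by
    rw [hT', Finset.card_erase_of_mem hrepmem, T'_eq m,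
      Finset.card_image_of_injective _
        (fun x y h => by simpa using h : Function.Injective (true :: ·)),
      (card_NF m).1]
  calc L.flatten.count true = (L.map (List.count true)).sum := List.count_flatten
    _ = L.toFinset.sum (fun w => w.count true) := (List.sum_toFinset _ hnd).symm
    _ = L.toFinset.sum (fun w => (F w).card) := (Finset.sum_congr rfl hFcard).symm
    _ = (L.toFinset.biUnion F).card := (Finset.card_biUnion hdisj).symm
    _ = T.card := by rw [← hTbi]
    _ = Nat.fib (m + 1 + 1) - 1 := hTcard
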